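/- arXiv:1701.04643 — 6 statements merged into one kernel-verified Lean document; each statement's English description precedes it below -/
import Mathlib

section
/- For every R ∈ (0,1) and every integer N ≥ 1, the quantity η_{N,R} = N ∑_{k=N+1}^∞ cos(2πkR)/k² satisfies |η_{N,R}| ≤ min( 1, (2 + π³/8) / (|sin(πR)| · N) ). -/
/-!
The bound by `1` comes from `|cos| ≤ 1` and `1/(N+1+k)² ≤ 1/(N+k) - 1/(N+k+1)`, which telescopes
to `1/N`. For the other one, `2 sin(πR) cos(2πkR) = sin((2k+1)πR) - sin((2k-1)πR)` turns the series
into `∑ aₖ (bₖ₊₁ - bₖ)` with `aₖ = 1/(N+1+k)²` decreasing and `|bₖ| ≤ 1`; summation by parts bounds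
it by `2 a₀`, so `|η_{N,R}| ≤ N / (|sin(πR)| (N+1)²) ≤ 1 / (|sin(πR)| N)`.
-/

open Real Finset

lemma abs_tsum_le_of_forall_abs_sum_range_le {f : ℕ → ℝ} (hf : Summable f) {C : ℝ}
    (h : ∀ M, |∑ k ∈ range M, f k| ≤ C) : |∑' k, f k| ≤ C :=
  le_of_tendsto' hf.hasSum.tendsto_sum_nat.abs h

lemma sum_range_one_div_add_one_add_sq_le {x : ℝ} (hx : 0 < x) (M : ℕ) :
    ∑ k ∈ range M, 1 / (x + 1 + k) ^ 2 ≤ 1 / x := by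
  have hterm : ∀ k : ℕ, 1 / (x + 1 + k) ^ 2 ≤ 1 / (x + k) - 1 / (x + (k + 1 : ℕ)) := by
    intro k
    have hk : 0 < x + k := by positivity
    push_cast
    rw [div_sub_div _ _ hk.ne' (by positivity), div_le_div_iff₀ (by positivity) (by positivity)]
    nlinarith
  calc ∑ k ∈ range M, 1 / (x + 1 + k) ^ 2
      ≤ ∑ k ∈ range M, (1 / (x + k) - 1 / (x + (k + 1 : ℕ))) := sum_le_sum fun k _ => hterm k
    _ = 1 / x - 1 / (x + M) := by rw [sum_range_sub' (fun k : ℕ => 1 / (x + k))]; simp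
    _ ≤ 1 / x := sub_le_self _ (by positivity)

lemma summable_one_div_add_one_add_sq {x : ℝ} (hx : 0 < x) :
    Summable fun k : ℕ => 1 / (x + 1 + k) ^ 2 :=
  summable_of_sum_range_le (fun _ => by positivity) (sum_range_one_div_add_one_add_sq_le hx)

lemma sum_range_mul_sub_eq {R : Type*} [CommRing R] (a b : ℕ → R) (M : ℕ) :
    ∑ k ∈ range M, a k * (b (k + 1) - b k) =
      a M * b M - a 0 * b 0 + ∑ k ∈ range M, (a k - a (k + 1)) * b (k + 1) := by
  induction M with
  | zero => simp
  | succ M ih => rw [sum_range_succ, sum_range_succ, ih]; ring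

lemma abs_sum_range_mul_sub_le {a b : ℕ → ℝ} (ha : Antitone a) (ha₀ : ∀ k, 0 ≤ a k) {B : ℝ}
    (hb : ∀ k, |b k| ≤ B) (M : ℕ) :
    |∑ k ∈ range M, a k * (b (k + 1) - b k)| ≤ 2 * B * a 0 := by
  have hab : ∀ k, |a k * b k| ≤ a k * B := fun k => by
    rw [abs_mul, abs_of_nonneg (ha₀ k)]; exact mul_le_mul_of_nonneg_left (hb k) (ha₀ k)
  have hsum : |∑ k ∈ range M, (a k - a (k + 1)) * b (k + 1)| ≤ (a 0 - a M) * B :=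
    calc |∑ k ∈ range M, (a k - a (k + 1)) * b (k + 1)|
        ≤ ∑ k ∈ range M, (a k - a (k + 1)) * B := by
          refine (abs_sum_le_sum_abs _ _).trans (sum_le_sum fun k _ => ?_)
          have hk : 0 ≤ a k - a (k + 1) := sub_nonneg.mpr (ha k.le_succ)
          rw [abs_mul, abs_of_nonneg hk]
          exact mul_le_mul_of_nonneg_left (hb _) hk
      _ = (a 0 - a M) * B := by rw [← sum_mul, sum_range_sub']
  rw [sum_range_mul_sub_eq]
  have := abs_add_le (a M * b M - a 0 * b 0) (∑ k ∈ range M, (a k - a (k + 1)) * b (k + 1))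
  have := abs_sub (a M * b M) (a 0 * b 0)
  linarith [hab M, hab 0]

lemma two_mul_sin_mul_cos_eq_sin_add_sub_sin_sub (t y : ℝ) :
    2 * sin t * cos y = sin (y + t) - sin (y - t) := by
  rw [two_mul_sin_mul_cos, ← neg_sub y t, sin_neg]; ring_nf

lemma abs_sin_mul_abs_sum_range_cos_div_sq_le {c : ℝ} (hc : 0 < c) (x t : ℝ) (M : ℕ) :
    |sin t| * |∑ k ∈ range M, cos (x + 2 * k * t) / (c + k) ^ 2| ≤ 1 / c ^ 2 := by
  set a : ℕ → ℝ := fun k => 1 / (c + k) ^ 2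
  set b : ℕ → ℝ := fun k => sin (x + (2 * k - 1) * t)
  have ha : Antitone a := fun i j hij => by
    have : (i : ℝ) ≤ j := by exact_mod_cast hij
    simp only [a]; gcongr
  have hterm : ∀ k : ℕ, 2 * sin t * (cos (x + 2 * k * t) / (c + k) ^ 2) = a k * (b (k + 1) - b k) :=
    fun k => by
      simp only [a, b]
      push_cast
      rw [← mul_div_assoc, two_mul_sin_mul_cos_eq_sin_add_sub_sin_sub,
        show x + 2 * k * t + t = x + (2 * (k + 1) - 1) * t by ring,
        show x + 2 * k * t - t = x + (2 * k - 1) * t by ring]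
      ring
  have hsum : 2 * sin t * ∑ k ∈ range M, cos (x + 2 * k * t) / (c + k) ^ 2
      = ∑ k ∈ range M, a k * (b (k + 1) - b k) := by
    rw [mul_sum]; exact sum_congr rfl fun k _ => hterm k
  have hbound := abs_sum_range_mul_sub_le (b := b) ha (fun k => by positivity)
    (fun k => abs_sin_le_one _) M
  rw [← hsum, abs_mul, abs_mul, abs_two] at hbound
  simp only [a, CharP.cast_eq_zero, add_zero] at hbound
  linarith

/-- For every `R ∈ (0,1)` and integer `N ≥ 1`, the quantity
`η_{N,R} = N ∑_{k=N+1}^∞ cos(2πkR)/k²` satisfies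
`|η_{N,R}| ≤ min(1, (2 + π³/8)/(|sin(πR)|·N))`. -/
theorem etaNR_bound (R : ℝ) (hR : R ∈ Set.Ioo (0 : ℝ) 1) (N : ℕ) (hN : 1 ≤ N) :
    |(N : ℝ) * ∑' k : ℕ,
        Real.cos (2 * π * ((N : ℝ) + 1 + (k : ℝ)) * R) / ((N : ℝ) + 1 + (k : ℝ)) ^ 2| ≤
      min 1 ((2 + π ^ 3 / 8) / (|Real.sin (π * R)| * (N : ℝ))) := by
  obtain ⟨hR₀, hR₁⟩ := hR
  have hNpos : (0 : ℝ) < N := by exact_mod_cast hN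
  have hs : 0 < |sin (π * R)| :=
    abs_pos.mpr (sin_pos_of_pos_of_lt_pi (by positivity) (by nlinarith [pi_pos])).ne'
  set f : ℕ → ℝ := fun k => cos (2 * π * (N + 1 + k) * R) / (N + 1 + k) ^ 2
  have hf_le : ∀ k, |f k| ≤ 1 / (N + 1 + k) ^ 2 := fun k => by
    simp only [f, abs_div, abs_pow, abs_of_pos (by positivity : (0 : ℝ) < N + 1 + k)]
    gcongr
    exact abs_cos_le_one _
  have hf : Summable f := (summable_one_div_add_one_add_sq hNpos).of_norm_bounded hf_le
  have hcrude : |∑' k, f k| ≤ 1 / N := abs_tsum_le_of_forall_abs_sum_range_le hf fun M =>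
    (abs_sum_le_sum_abs _ _).trans <|
      (sum_le_sum fun k _ => hf_le k).trans (sum_range_one_div_add_one_add_sq_le hNpos M)
  have hf_eq : f = fun k : ℕ => cos (2 * π * (N + 1) * R + 2 * k * (π * R)) / (N + 1 + k) ^ 2 := by
    funext k; simp only [f]; ring_nf
  have habel : |∑' k, f k| ≤ 1 / (N + 1) ^ 2 / |sin (π * R)| :=
    abs_tsum_le_of_forall_abs_sum_range_le hf fun M => by
      rw [le_div_iff₀ hs, mul_comm, hf_eq]
      exact abs_sin_mul_abs_sum_range_cos_div_sq_le (by positivity) _ _ M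
  rw [abs_mul, abs_of_pos hNpos, le_min_iff]
  constructor
  · calc (N : ℝ) * |∑' k, f k| ≤ N * (1 / N) := by gcongr
      _ = 1 := by field_simp
  · rw [le_div_iff₀ (by positivity)]
    calc (N : ℝ) * |∑' k, f k| * (|sin (π * R)| * N)
        ≤ N * (1 / (N + 1) ^ 2 / |sin (π * R)|) * (|sin (π * R)| * N) := by gcongr
      _ = N ^ 2 / (N + 1) ^ 2 := by field_simp
      _ ≤ 1 := by rw [div_le_one (by positivity)]; gcongr; linarith
      _ ≤ 2 + π ^ 3 / 8 := by linarith [pow_pos pi_pos 3]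
end

section
/- Under the stated assumptions, there exist constants 0 < c ≤ C < ∞ such that for all N ≥ 1, c ‖u_N − u‖_{H¹}² ≤ E_N − E ≤ C ‖u_N − u‖_{H¹}². (Lemma on convergence of the discrete ground state, eq. (EN-E).) -/
open MeasureTheory intervalIntegral Real Filter Topology

noncomputable section

/-- `v` belongs to `H¹_per` with (weak) derivative `v'`. -/
def IsH1per (v v' : ℝ → ℝ) : Prop :=
  Continuous v ∧ (∀ x, v (x + 1) = v x) ∧ (∀ x, v' (x + 1) = v' x) ∧
  (∀ a b : ℝ, IntervalIntegrable v' volume a b) ∧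
  IntervalIntegrable (fun t => (v' t) ^ 2) volume 0 1 ∧
  (∀ x : ℝ, v x = v 0 + ∫ t in (0:ℝ)..x, v' t)

/-- The bilinear form `a_R`. -/
def aR (z1 z2 R : ℝ) (v v' w w' : ℝ → ℝ) : ℝ :=
  (∫ x in (0:ℝ)..1, v' x * w' x) - z1 * v 0 * w 0 - z2 * v R * w R

/-- `v` is a real trigonometric polynomial of degree at most `N`. -/
def InXN (N : ℕ) (v : ℝ → ℝ) : Prop :=
  ∃ c : ℤ → ℂ, (∀ k : ℤ, c (-k) = starRingEnd ℂ (c k)) ∧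
    ∀ x : ℝ, (v x : ℂ) =
      ∑ k ∈ Finset.Icc (-(N:ℤ)) (N:ℤ), c k * Complex.exp (2 * (π:ℂ) * Complex.I * (k:ℂ) * (x:ℂ))

/-- `(u, E)` is a ground state of the continuous problem for `z1, z2, R`. -/
def IsGroundState (z1 z2 R : ℝ) (u u' : ℝ → ℝ) (E : ℝ) : Prop :=
  IsH1per u u' ∧
  (∫ x in (0:ℝ)..1, (u x) ^ 2) = 1 ∧
  (∀ x : ℝ, 0 ≤ u x) ∧
  (∀ v v' : ℝ → ℝ, IsH1per v v' →
    aR z1 z2 R u u' v v' = E * ∫ x in (0:ℝ)..1, u x * v x) ∧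
  (∀ v v' : ℝ → ℝ, IsH1per v v' →
    E * ∫ x in (0:ℝ)..1, (v x) ^ 2 ≤ aR z1 z2 R v v' v v') ∧
  (∃ μ : ℝ, 0 < μ ∧ ∀ v v' : ℝ → ℝ, IsH1per v v' →
    (∫ x in (0:ℝ)..1, (v x) ^ 2) = 1 → (∫ x in (0:ℝ)..1, u x * v x) = 0 →
    E + μ ≤ aR z1 z2 R v v' v v')

/-- `(uN, EN)` is a discrete ground state in `X_N` for `z1, z2, R`. -/
def IsDiscreteGroundState (z1 z2 R : ℝ) (N : ℕ) (uN uN' : ℝ → ℝ) (EN : ℝ) : Prop :=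
  IsH1per uN uN' ∧ InXN N uN ∧
  (∫ x in (0:ℝ)..1, (uN x) ^ 2) = 1 ∧
  (0 ≤ ∫ x in (0:ℝ)..1, uN x) ∧
  (∀ v v' : ℝ → ℝ, IsH1per v v' → InXN N v →
    aR z1 z2 R uN uN' v v' = EN * ∫ x in (0:ℝ)..1, uN x * v x) ∧
  (∀ v v' : ℝ → ℝ, IsH1per v v' → InXN N v →
    EN * ∫ x in (0:ℝ)..1, (v x) ^ 2 ≤ aR z1 z2 R v v' v v')

/-!
Write `e = u_N - u`. Testing the two eigenvalue equations with `u_N` and `u` gives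
`‖e'‖² = (E_N - E) + E ‖e‖² + z₁ e(0)² + z₂ e(R)²`; since `E < 0` this is already the upper
bound. For the lower bound the point terms are absorbed by the trace inequality
`e(p)² ≤ (2/δ) ‖e‖² + 2δ ‖e'‖²`, and `‖e‖²` is controlled by the spectral gap: writing
`u_N = α u + w` with `w ⊥ u` gives `E_N - E ≥ μ (1 - α²)` and `‖e‖² = 2 - 2α`, while
`∫ u_N ≥ 0 < ∫ u` keeps `α` away from `-1`.
-/

open Set

theorem IntervalIntegrable.mul_of_sq {f g : ℝ → ℝ} {a b : ℝ}
    (hf : IntervalIntegrable f volume a b) (hg : IntervalIntegrable g volume a b)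
    (hf2 : IntervalIntegrable (fun x => f x ^ 2) volume a b)
    (hg2 : IntervalIntegrable (fun x => g x ^ 2) volume a b) :
    IntervalIntegrable (fun x => f x * g x) volume a b := by
  rw [intervalIntegrable_iff] at *
  exact ((memLp_two_iff_integrable_sq hf.aestronglyMeasurable).2 hf2).integrable_mul
    ((memLp_two_iff_integrable_sq hg.aestronglyMeasurable).2 hg2)

theorem integral_sub_const_mul_sq {f g : ℝ → ℝ} {a b : ℝ} (c : ℝ)
    (hf2 : IntervalIntegrable (fun x => f x ^ 2) volume a b)
    (hg2 : IntervalIntegrable (fun x => g x ^ 2) volume a b)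
    (hfg : IntervalIntegrable (fun x => f x * g x) volume a b) :
    ∫ x in a..b, (f x - c * g x) ^ 2 =
      (∫ x in a..b, f x ^ 2) - 2 * c * (∫ x in a..b, f x * g x) + c ^ 2 * ∫ x in a..b, g x ^ 2 := by
  have hexp : (fun x => (f x - c * g x) ^ 2) =
      fun x => f x ^ 2 - (2 * c) * (f x * g x) + c ^ 2 * g x ^ 2 := by
    funext x; ring
  rw [hexp, intervalIntegral.integral_add (hf2.sub (hfg.const_mul _)) (hg2.const_mul _),
    intervalIntegral.integral_sub hf2 (hfg.const_mul _), intervalIntegral.integral_const_mul,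
    intervalIntegral.integral_const_mul]

theorem sq_integral_le_mul_integral_sq {f : ℝ → ℝ} {a b : ℝ} (hab : a ≤ b)
    (hf : IntervalIntegrable f volume a b)
    (hf2 : IntervalIntegrable (fun x => f x ^ 2) volume a b) :
    (∫ x in a..b, f x) ^ 2 ≤ (b - a) * ∫ x in a..b, f x ^ 2 := by
  have hquad : ∀ c : ℝ,
      0 ≤ (b - a) * (c * c) + (-2 * ∫ x in a..b, f x) * c + ∫ x in a..b, f x ^ 2 := by
    intro c
    have h := integral_sub_const_mul_sq (g := fun _ => 1) c hf2 (by simp) (by simpa using hf)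
    simp only [one_pow, mul_one, intervalIntegral.integral_const, smul_eq_mul] at h
    nlinarith [intervalIntegral.integral_nonneg (μ := volume) hab fun x _ => sq_nonneg (f x - c)]
  have := discrim_le_zero hquad
  rw [discrim] at this
  nlinarith

namespace IsH1per

variable {v v' w w' e e' : ℝ → ℝ}

theorem const (c : ℝ) : IsH1per (fun _ => c) (fun _ => 0) :=
  ⟨continuous_const, fun _ => rfl, fun _ => rfl, fun _ _ => intervalIntegrable_const,
    by simp, fun x => by simp⟩

theorem intervalIntegrable_sq (hv : IsH1per v v') (a b : ℝ) :
    IntervalIntegrable (fun x => v x ^ 2) volume a b :=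
  (hv.1.pow 2).intervalIntegrable a b

theorem const_mul (hv : IsH1per v v') (c : ℝ) :
    IsH1per (fun x => c * v x) (fun x => c * v' x) := by
  obtain ⟨hcont, hper, hper', hint, hsq, hrep⟩ := hv
  refine ⟨continuous_const.mul hcont, fun x => by simp only [hper], fun x => by simp only [hper'],
    fun a b => (hint a b).const_mul c, ?_, fun x => ?_⟩
  · simpa only [mul_pow] using hsq.const_mul (c ^ 2)
  · rw [intervalIntegral.integral_const_mul, ← mul_add, ← hrep x]

theorem sub (hv : IsH1per v v') (hw : IsH1per w w') :
    IsH1per (fun x => v x - w x) (fun x => v' x - w' x) := by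
  obtain ⟨hcont, hper, hper', hint, hsq, hrep⟩ := hv
  obtain ⟨hcont₂, hper₂, hper₂', hint₂, hsq₂, hrep₂⟩ := hw
  refine ⟨hcont.sub hcont₂, fun x => by simp only [hper, hper₂],
    fun x => by simp only [hper', hper₂'], fun a b => (hint a b).sub (hint₂ a b), ?_, fun x => ?_⟩
  · have hexp : (fun x => (v' x - w' x) ^ 2) =
        fun x => v' x ^ 2 - 2 * (v' x * w' x) + w' x ^ 2 := by
      funext x; ring
    rw [hexp]
    exact (hsq.sub (((hint 0 1).mul_of_sq (hint₂ 0 1) hsq hsq₂).const_mul 2)).add hsq₂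
  · rw [intervalIntegral.integral_sub (hint 0 x) (hint₂ 0 x)]
    linarith [hrep x, hrep₂ x]

theorem sq_sub_le (he : IsH1per e e') {y p : ℝ} (hy : y ∈ Icc 0 1) (hp : p ∈ Icc 0 1) :
    (e p - e y) ^ 2 ≤ |p - y| * ∫ x in 0..1, e' x ^ 2 := by
  wlog hyp : y ≤ p generalizing y p
  · rw [abs_sub_comm, ← neg_sub, neg_sq]
    exact this hp hy (le_of_not_ge hyp)
  obtain ⟨-, -, -, hint, hsq, hrep⟩ := he
  have hdiff : e p - e y = ∫ t in y..p, e' t := by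
    rw [hrep p, hrep y, add_sub_add_left_eq_sub,
      intervalIntegral.integral_interval_sub_left (hint 0 p) (hint 0 y)]
  have hsq_yp : IntervalIntegrable (fun t => e' t ^ 2) volume y p :=
    hsq.mono_set (by
      rw [uIcc_of_le hyp, uIcc_of_le zero_le_one]; exact Icc_subset_Icc hy.1 hp.2)
  rw [hdiff, abs_of_nonneg (sub_nonneg.2 hyp)]
  calc (∫ t in y..p, e' t) ^ 2 ≤ (p - y) * ∫ t in y..p, e' t ^ 2 :=
        sq_integral_le_mul_integral_sq hyp (hint y p) hsq_yp
    _ ≤ (p - y) * ∫ t in (0:ℝ)..1, e' t ^ 2 :=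
        mul_le_mul_of_nonneg_left (intervalIntegral.integral_mono_interval hy.1 hyp hp.2
          (ae_of_all _ fun _ => sq_nonneg _) hsq) (sub_nonneg.2 hyp)

theorem sq_le (he : IsH1per e e') {p δ : ℝ} (hp : p ∈ Icc 0 1) (hδ0 : 0 < δ) (hδ1 : δ ≤ 1) :
    e p ^ 2 ≤ 2 / δ * (∫ x in 0..1, e x ^ 2) + 2 * δ * ∫ x in 0..1, e' x ^ 2 := by
  set D := ∫ x in (0:ℝ)..1, e' x ^ 2
  -- average the pointwise bound over a window `[a, a + δ] ⊆ [0, 1]` containing `p`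
  set a := min p (1 - δ)
  have ha0 : 0 ≤ a := le_min hp.1 (by linarith)
  have haδ : a + δ ≤ 1 := by linarith [min_le_right p (1 - δ)]
  have hpa : a ≤ p := min_le_left _ _
  have hpδ : p ≤ a + δ := by
    rcases min_cases p (1 - δ) with ⟨h, _⟩ | ⟨h, _⟩ <;> linarith [hp.2]
  have hpoint : ∀ y ∈ Icc a (a + δ), e p ^ 2 ≤ 2 * e y ^ 2 + 2 * δ * D := by
    intro y hy
    have h := he.sq_sub_le ⟨ha0.trans hy.1, hy.2.trans haδ⟩ hp
    have habs : |p - y| ≤ δ := abs_sub_le_iff.2 ⟨by linarith [hy.1], by linarith [hy.2]⟩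
    have hD : 0 ≤ D := intervalIntegral.integral_nonneg zero_le_one fun _ _ => sq_nonneg _
    nlinarith [mul_le_mul_of_nonneg_right habs hD, sq_nonneg (e p - 2 * e y)]
  have hJ := intervalIntegral.integral_mono_on (by linarith) intervalIntegrable_const
    (((he.intervalIntegrable_sq a (a + δ)).const_mul 2).add intervalIntegrable_const) hpoint
  rw [intervalIntegral.integral_const, intervalIntegral.integral_add
      ((he.intervalIntegrable_sq a (a + δ)).const_mul 2) intervalIntegrable_const,
    intervalIntegral.integral_const_mul, intervalIntegral.integral_const] at hJ
  have hsub : ∫ x in a..a + δ, e x ^ 2 ≤ ∫ x in (0:ℝ)..1, e x ^ 2 :=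
    intervalIntegral.integral_mono_interval ha0 (by linarith) haδ
      (ae_of_all _ fun _ => sq_nonneg _) (he.intervalIntegrable_sq 0 1)
  simp only [add_sub_cancel_left, smul_eq_mul] at hJ
  refine le_of_mul_le_mul_left ?_ hδ0
  rw [mul_add, ← mul_assoc, mul_div_cancel₀ _ hδ0.ne']
  nlinarith

theorem point_terms_le (he : IsH1per e e') {z1 z2 R : ℝ} (hz1 : 0 ≤ z1) (hz2 : 0 ≤ z2)
    (hR : R ∈ Icc 0 1) :
    z1 * e 0 ^ 2 + z2 * e R ^ 2 ≤
      2 * (z1 + z2) * (4 * (z1 + z2) + 1) * (∫ x in 0..1, e x ^ 2) +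
        1 / 2 * ∫ x in 0..1, e' x ^ 2 := by
  set Z := z1 + z2
  set δ := 1 / (4 * Z + 1)
  have hZ : 0 ≤ Z := add_nonneg hz1 hz2
  have hδ0 : 0 < δ := by positivity
  have hδ1 : δ ≤ 1 := by rw [div_le_one (by positivity)]; linarith
  have hZδ : 2 * Z * δ ≤ 1 / 2 := by
    rw [mul_one_div, div_le_div_iff₀ (by positivity) two_pos]; linarith
  have hδinv : 2 / δ = 2 * (4 * Z + 1) := by rw [div_div_eq_mul_div, div_one]
  have h0 := he.sq_le ⟨le_rfl, zero_le_one⟩ hδ0 hδ1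
  have hR := he.sq_le hR hδ0 hδ1
  have hD : 0 ≤ ∫ x in (0:ℝ)..1, e' x ^ 2 :=
    intervalIntegral.integral_nonneg zero_le_one fun _ _ => sq_nonneg _
  rw [hδinv] at h0 hR
  nlinarith [mul_le_mul_of_nonneg_left h0 hz1, mul_le_mul_of_nonneg_left hR hz2,
    mul_le_mul_of_nonneg_right hZδ hD]

end IsH1per

theorem aR_self (z1 z2 R : ℝ) (v v' : ℝ → ℝ) :
    aR z1 z2 R v v' v v' = (∫ x in 0..1, v' x ^ 2) - z1 * v 0 ^ 2 - z2 * v R ^ 2 := by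
  simp only [aR, sq, mul_assoc]

theorem aR_sub_const_mul_self {z1 z2 R : ℝ} {v v' w w' : ℝ → ℝ} (hv : IsH1per v v')
    (hw : IsH1per w w') (c : ℝ) :
    aR z1 z2 R (fun x => v x - c * w x) (fun x => v' x - c * w' x)
        (fun x => v x - c * w x) (fun x => v' x - c * w' x) =
      aR z1 z2 R v v' v v' - 2 * c * aR z1 z2 R w w' v v' + c ^ 2 * aR z1 z2 R w w' w w' := by
  have hcomm : ∫ x in (0:ℝ)..1, w' x * v' x = ∫ x in (0:ℝ)..1, v' x * w' x := by
    simp only [mul_comm]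
  obtain ⟨-, -, -, hint, hsq, -⟩ := hv
  obtain ⟨-, -, -, hint₂, hsq₂, -⟩ := hw
  rw [aR_self, aR_self, aR_self, aR, hcomm,
    integral_sub_const_mul_sq c hsq hsq₂ ((hint 0 1).mul_of_sq (hint₂ 0 1) hsq hsq₂)]
  ring

theorem aR_const_mul_self (z1 z2 R c : ℝ) (v v' : ℝ → ℝ) :
    aR z1 z2 R (fun x => c * v x) (fun x => c * v' x) (fun x => c * v x) (fun x => c * v' x) =
      c ^ 2 * aR z1 z2 R v v' v v' := by
  simp only [aR_self, mul_pow, intervalIntegral.integral_const_mul]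
  ring

-- Used with `s = ∫ u`, `t = ∫ u_N` and `1 - α² = ‖u_N - α u‖²`: the sign of `t` keeps `α` away
-- from `-1`, where `2 - 2α` would not be controlled by `1 - α²`.
theorem sq_mul_two_sub_two_mul_le {s α t : ℝ} (hs0 : 0 < s) (hs1 : s ≤ 1) (ht : 0 ≤ t)
    (h : (t - α * s) ^ 2 ≤ 1 - α ^ 2) :
    s ^ 2 * (2 - 2 * α) ≤ 16 * (1 - α ^ 2) := by
  have hα : α ^ 2 ≤ 1 := by nlinarith
  have hα1 : α ≤ 1 := by nlinarith
  have hαm1 : -1 ≤ α := by nlinarith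
  have hs2 : s ^ 2 ≤ 1 := by nlinarith
  rcases le_or_gt α (-1 / 2) with hα' | hα'
  · have hts : s / 2 ≤ t - α * s := by nlinarith
    have hts2 : s ^ 2 / 4 ≤ (t - α * s) ^ 2 := by nlinarith
    nlinarith
  · nlinarith [mul_le_mul_of_nonneg_right hs2 (by linarith : (0:ℝ) ≤ 2 - 2 * α)]

namespace IsGroundState

variable {z1 z2 R : ℝ} {u u' : ℝ → ℝ} {E : ℝ}

theorem le_neg_add (hu : IsGroundState z1 z2 R u u' E) : E ≤ -(z1 + z2) := by
  obtain ⟨-, -, -, -, hlow, -⟩ := hu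
  have h := hlow _ _ (IsH1per.const 1)
  simp only [aR, one_pow, intervalIntegral.integral_const, mul_zero, mul_one, sub_zero,
    smul_eq_mul] at h
  linarith

theorem integral_pos (hu : IsGroundState z1 z2 R u u' E) : 0 < ∫ x in 0..1, u x := by
  obtain ⟨huH, hu1, hpos, -⟩ := hu
  refine intervalIntegral.integral_pos zero_lt_one huH.1.continuousOn (fun x _ => hpos x) ?_
  by_contra! hle
  have hzero : ∫ x in (0:ℝ)..1, u x ^ 2 = ∫ x in (0:ℝ)..1, (0:ℝ) := by
    refine intervalIntegral.integral_congr fun x hx => ?_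
    rw [uIcc_of_le zero_le_one] at hx
    simp [le_antisymm (hle x hx) (hpos x)]
  simp [hu1] at hzero

theorem integral_le_one (hu : IsGroundState z1 z2 R u u' E) : ∫ x in 0..1, u x ≤ 1 := by
  obtain ⟨huH, hu1, -⟩ := hu
  have h := sq_integral_le_mul_integral_sq zero_le_one (huH.1.intervalIntegrable 0 1)
    (huH.intervalIntegrable_sq 0 1)
  rw [hu1, sub_zero, mul_one] at h
  nlinarith

theorem exists_gap (hu : IsGroundState z1 z2 R u u' E) :
    ∃ μ > 0, ∀ w w', IsH1per w w' → ∫ x in 0..1, u x * w x = 0 →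
      (E + μ) * ∫ x in 0..1, w x ^ 2 ≤ aR z1 z2 R w w' w w' := by
  obtain ⟨-, -, -, -, hlow, μ, hμ, hgap⟩ := hu
  refine ⟨μ, hμ, fun w w' hw horth => ?_⟩
  rcases (intervalIntegral.integral_nonneg zero_le_one fun x _ => sq_nonneg (w x) :
    0 ≤ ∫ x in (0:ℝ)..1, w x ^ 2).eq_or_lt with hm | hm
  · rw [← hm, mul_zero]
    simpa [← hm] using hlow w w' hw
  set m := ∫ x in (0:ℝ)..1, w x ^ 2 with hm_def
  set t := (√m)⁻¹
  have ht : t ^ 2 = m⁻¹ := by rw [inv_pow, Real.sq_sqrt hm.le]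
  have hnorm : ∫ x in (0:ℝ)..1, (t * w x) ^ 2 = 1 := by
    simp only [mul_pow, intervalIntegral.integral_const_mul, ← hm_def, ht, inv_mul_cancel₀ hm.ne']
  have horth' : ∫ x in (0:ℝ)..1, u x * (t * w x) = 0 := by
    simp only [mul_left_comm (u _), intervalIntegral.integral_const_mul, horth, mul_zero]
  have h := hgap _ _ (hw.const_mul t) hnorm horth'
  rw [aR_const_mul_self, ht] at h
  rwa [mul_comm, ← le_inv_mul_iff₀ hm]

section Projection

variable {f f' : ℝ → ℝ}

theorem integral_sub_sq_eq (hu : IsGroundState z1 z2 R u u' E) (hf : IsH1per f f')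
    (hf1 : ∫ x in 0..1, f x ^ 2 = 1) :
    ∫ x in 0..1, (f x - u x) ^ 2 = 2 - 2 * ∫ x in 0..1, u x * f x := by
  obtain ⟨huH, hu1, -⟩ := hu
  have h := integral_sub_const_mul_sq 1 (hf.intervalIntegrable_sq 0 1)
    (huH.intervalIntegrable_sq 0 1) ((hf.1.mul huH.1).intervalIntegrable (μ := volume) 0 1)
  simp only [one_mul] at h
  rw [h, hf1, hu1]
  simp only [mul_comm (f _)]
  ring

theorem integral_mul_sub_proj_eq_zero (hu : IsGroundState z1 z2 R u u' E) (hf : IsH1per f f') :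
    ∫ x in 0..1, u x * (f x - (∫ y in 0..1, u y * f y) * u x) = 0 := by
  obtain ⟨huH, hu1, -⟩ := hu
  have huf : IntervalIntegrable (fun x => u x * f x) volume 0 1 :=
    (huH.1.mul hf.1).intervalIntegrable 0 1
  simp only [mul_sub, mul_left_comm (u _), ← sq]
  rw [intervalIntegral.integral_sub huf ((huH.intervalIntegrable_sq 0 1).const_mul _),
    intervalIntegral.integral_const_mul, hu1,
    mul_one, sub_self]

theorem integral_sub_proj_sq (hu : IsGroundState z1 z2 R u u' E) (hf : IsH1per f f')
    (hf1 : ∫ x in 0..1, f x ^ 2 = 1) :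
    ∫ x in 0..1, (f x - (∫ y in 0..1, u y * f y) * u x) ^ 2 =
      1 - (∫ x in 0..1, u x * f x) ^ 2 := by
  obtain ⟨huH, hu1, -⟩ := hu
  rw [integral_sub_const_mul_sq _ (hf.intervalIntegrable_sq 0 1) (huH.intervalIntegrable_sq 0 1)
    ((hf.1.mul huH.1).intervalIntegrable 0 1), hf1, hu1]
  simp only [mul_comm (f _)]
  ring

theorem aR_sub_proj (hu : IsGroundState z1 z2 R u u' E) (hf : IsH1per f f') :
    aR z1 z2 R (fun x => f x - (∫ y in 0..1, u y * f y) * u x)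
        (fun x => f' x - (∫ y in 0..1, u y * f y) * u' x)
        (fun x => f x - (∫ y in 0..1, u y * f y) * u x)
        (fun x => f' x - (∫ y in 0..1, u y * f y) * u' x) =
      aR z1 z2 R f f' f f' - E * (∫ x in 0..1, u x * f x) ^ 2 := by
  obtain ⟨huH, hu1, -, hweak, -⟩ := hu
  rw [aR_sub_const_mul_self hf huH, hweak f f' hf, hweak u u' huH]
  simp only [← sq, hu1]
  ring

end Projection

theorem exists_mul_integral_sub_sq_le (hu : IsGroundState z1 z2 R u u' E) :
    ∃ κ > 0, ∀ f f', IsH1per f f' → ∫ x in 0..1, f x ^ 2 = 1 → 0 ≤ ∫ x in 0..1, f x →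
      κ * ∫ x in 0..1, (f x - u x) ^ 2 ≤ aR z1 z2 R f f' f f' - E := by
  obtain ⟨μ, hμ, hgap⟩ := hu.exists_gap
  have hs0 := hu.integral_pos
  have hs1 := hu.integral_le_one
  set s := ∫ x in (0:ℝ)..1, u x
  refine ⟨μ * s ^ 2 / 16, by positivity, fun f f' hf hf1 hf0 => ?_⟩
  have hw := hf.sub (hu.1.const_mul (∫ y in (0:ℝ)..1, u y * f y))
  have hspectral := hgap _ _ hw (hu.integral_mul_sub_proj_eq_zero hf)
  rw [hu.integral_sub_proj_sq hf hf1, hu.aR_sub_proj hf] at hspectral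
  have hmean := sq_integral_le_mul_integral_sq zero_le_one (hw.1.intervalIntegrable 0 1)
    (hw.intervalIntegrable_sq 0 1)
  rw [intervalIntegral.integral_sub (hf.1.intervalIntegrable 0 1)
      ((hu.1.1.intervalIntegrable 0 1).const_mul _), intervalIntegral.integral_const_mul,
    hu.integral_sub_proj_sq hf hf1, sub_zero, one_mul] at hmean
  rw [hu.integral_sub_sq_eq hf hf1]
  nlinarith [sq_mul_two_sub_two_mul_le hs0 hs1 hf0 hmean]

theorem integral_deriv_sub_sq_eq (hu : IsGroundState z1 z2 R u u' E) {f f' : ℝ → ℝ}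
    (hf : IsH1per f f') (hf1 : ∫ x in 0..1, f x ^ 2 = 1) :
    ∫ x in 0..1, (f' x - u' x) ^ 2 =
      aR z1 z2 R f f' f f' - E + E * (∫ x in 0..1, (f x - u x) ^ 2) +
        z1 * (f 0 - u 0) ^ 2 + z2 * (f R - u R) ^ 2 := by
  rw [hu.integral_sub_sq_eq hf hf1]
  have hexp := aR_sub_const_mul_self (z1 := z1) (z2 := z2) (R := R) hf hu.1 1
  simp only [one_mul] at hexp
  obtain ⟨huH, hu1, -, hweak, -⟩ := hu
  rw [aR_self, hweak f f' hf, hweak u u' huH] at hexp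
  simp only [← sq, hu1] at hexp
  linear_combination hexp

end IsGroundState

theorem IsDiscreteGroundState.aR_self_eq {z1 z2 R : ℝ} {N : ℕ} {uN uN' : ℝ → ℝ} {EN : ℝ}
    (h : IsDiscreteGroundState z1 z2 R N uN uN' EN) : aR z1 z2 R uN uN' uN uN' = EN := by
  obtain ⟨hH, hX, h1, -, hweak, -⟩ := h
  rw [hweak uN uN' hH hX]
  simp only [← sq, h1, mul_one]

/-- Eq. (EN-E): there are constants `0 < c ≤ C < ∞` with
`c‖u_N−u‖²_{H¹} ≤ E_N − E ≤ C‖u_N−u‖²_{H¹}` for all `N ≥ 1`,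
where `‖w‖²_{H¹} = ∫₀¹ w² + ∫₀¹ (w')²`. -/
theorem energy_error_equiv_H1_error (z1 z2 R : ℝ) (hz1 : 0 < z1) (hz2 : 0 < z2)
    (hR : R ∈ Set.Ioo (0 : ℝ) 1)
    (u u' : ℝ → ℝ) (E : ℝ) (hu : IsGroundState z1 z2 R u u' E)
    (uN uN' : ℕ → ℝ → ℝ) (EN : ℕ → ℝ)
    (huN : ∀ N : ℕ, 1 ≤ N → IsDiscreteGroundState z1 z2 R N (uN N) (uN' N) (EN N)) :
    ∃ c C : ℝ, 0 < c ∧ c ≤ C ∧ ∀ N : ℕ, 1 ≤ N →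
      c * ((∫ x in (0:ℝ)..1, (uN N x - u x) ^ 2) +
            ∫ x in (0:ℝ)..1, (uN' N x - u' x) ^ 2) ≤ EN N - E ∧
      EN N - E ≤ C * ((∫ x in (0:ℝ)..1, (uN N x - u x) ^ 2) +
            ∫ x in (0:ℝ)..1, (uN' N x - u' x) ^ 2) := by
  obtain ⟨κ, hκ, hl2⟩ := hu.exists_mul_integral_sub_sq_le
  have hE : E ≤ 0 := by linarith [hu.le_neg_add]
  set K := 2 * (z1 + z2) * (4 * (z1 + z2) + 1) with hK_def
  have hK : 0 ≤ K := by positivity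
  refine ⟨κ / (2 * κ + 2 * K + 1), 1 - E, by positivity, ?_, fun N hN => ?_⟩
  · rw [div_le_iff₀ (by positivity)]
    nlinarith
  obtain ⟨hH, -, h1, h0, -⟩ := huN N hN
  have hl2N := hl2 _ _ hH h1 h0
  have hderiv := hu.integral_deriv_sub_sq_eq hH h1
  have hbdry := (hH.sub hu.1).point_terms_le hz1.le hz2.le (Ioo_subset_Icc_self hR)
  rw [(huN N hN).aR_self_eq] at hl2N hderiv
  rw [← hK_def] at hbdry
  have hA : 0 ≤ ∫ x in (0:ℝ)..1, (uN N x - u x) ^ 2 :=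
    intervalIntegral.integral_nonneg zero_le_one fun _ _ => sq_nonneg _
  have hD : 0 ≤ ∫ x in (0:ℝ)..1, (uN' N x - u' x) ^ 2 :=
    intervalIntegral.integral_nonneg zero_le_one fun _ _ => sq_nonneg _
  have hderiv_le : ∫ x in (0:ℝ)..1, (uN' N x - u' x) ^ 2 ≤
      2 * (EN N - E) + 2 * K * ∫ x in (0:ℝ)..1, (uN N x - u x) ^ 2 := by
    nlinarith [mul_nonpos_of_nonpos_of_nonneg hE hA]
  constructor
  · rw [div_mul_eq_mul_div, div_le_iff₀ (by positivity)]
    nlinarith [mul_le_mul_of_nonneg_left hl2N hK, mul_le_mul_of_nonneg_left hderiv_le hκ.le]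
  · nlinarith [mul_nonneg hz1.le (sq_nonneg (uN N 0 - u 0)),
      mul_nonneg hz2.le (sq_nonneg (uN N R - u R))]
end
end

section
/- Suppose (u, E) ∈ H¹_per × ℝ satisfies ∫₀¹ u² = 1 and a_R(u,v) = E ∫₀¹ u v for all v ∈ H¹_per, and suppose (u_N, E_N) ∈ X_N × ℝ satisfies ∫₀¹ u_N² = 1 and a_R(u_N, v) = E_N ∫₀¹ u_N v for all v ∈ X_N. Then the exact identity (E_N − E) · ( 1 − (1/2) ∫₀¹ (u_N − u)² ) = z1 u_N(0) (Π_N^⊥ u)(0) + z2 u_N(R) (Π_N^⊥ u)(R) holds. -/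
open MeasureTheory intervalIntegral Real

noncomputable section

/-- Fourier coefficient `ŵ(k) = ∫₀¹ w(x) e^{−2πikx} dx`. -/
def fc (w : ℝ → ℝ) (k : ℤ) : ℂ :=
  ∫ x in (0:ℝ)..1, (w x : ℂ) * Complex.exp (-(2 * (π:ℂ) * Complex.I * (k:ℂ) * (x:ℂ)))

/-- `(Π_N^⊥ w)(x) = w(x) − ∑_{|k|≤N} ŵ(k) e^{2πikx}`. -/
def projPerp (N : ℕ) (w : ℝ → ℝ) (x : ℝ) : ℝ :=
  w x - (∑ k ∈ Finset.Icc (-(N:ℤ)) (N:ℤ),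
    fc w k * Complex.exp (2 * (π:ℂ) * Complex.I * (k:ℂ) * (x:ℂ))).re

/-!
Test the equation for `u_N` with `Π_N u ∈ X_N` and the equation for `u` with `u_N`. The gradient
terms agree: periodic integration by parts moves all derivatives onto trigonometric polynomials,
turning them into `-⟨Π_N u, u_N''⟩` and `-⟨u, u_N''⟩`, which coincide because `u_N'' ∈ X_N` and
`Π_N u`, `u` have the same Fourier coefficients up to degree `N`. For the same reason
`⟨u_N, Π_N u⟩ = ⟨u_N, u⟩`. Subtracting the two equations leaves `(E_N − E) ⟨u, u_N⟩` against the
point terms, and `⟨u, u_N⟩ = 1 − ½ ‖u_N − u‖²` since both are normalized.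
-/

theorem integral_deriv_mul_eq_sub_of_eq_add_integral {g g' φ φ' : ℝ → ℝ} {a b : ℝ}
    (hg' : IntervalIntegrable g' volume a b) (hg : ∀ x, g x = g a + ∫ t in a..x, g' t)
    (hφ : ∀ x, HasDerivAt φ (φ' x) x) (hφ' : Continuous φ') :
    ∫ x in a..b, g' x * φ x = g b * φ b - g a * φ a - ∫ x in a..b, g x * φ' x := by
  have hg_eq : g = fun x => g a + ∫ t in a..x, g' t := funext hg
  have hgAC : AbsolutelyContinuousOnInterval g a b := by
    rw [hg_eq]
    exact ((LipschitzWith.const (g a)).lipschitzOnWith.absolutelyContinuousOnInterval).add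
      (hg'.absolutelyContinuousOnInterval_intervalIntegral Set.left_mem_uIcc)
  have hφ_deriv : deriv φ = φ' := funext fun x => (hφ x).deriv
  have hφAC : AbsolutelyContinuousOnInterval φ a b :=
    (contDiff_one_iff_deriv.mpr ⟨fun x => (hφ x).differentiableAt, hφ_deriv ▸ hφ'⟩).contDiffOn
      |>.absolutelyContinuousOnInterval
  have hg_deriv : ∀ᵐ x, x ∈ Set.uIoc a b → deriv g x = g' x := by
    filter_upwards [hg'.ae_hasDerivAt_integral] with x hx hxab
    rw [hg_eq]
    exact ((hx (Set.uIoc_subset_uIcc hxab) a Set.left_mem_uIcc).const_add (g a)).deriv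
  have h_ae : ∀ᵐ x, x ∈ Set.uIoc a b → deriv g x * φ x = g' x * φ x :=
    hg_deriv.mono fun x hx hxab => by rw [hx hxab]
  rw [← integral_congr_ae h_ae, ← hφ_deriv, hgAC.integral_mul_deriv_eq_deriv_mul hφAC]
  ring

theorem IsH1per.integral_deriv_mul_eq_neg {g g' φ φ' : ℝ → ℝ} (hg : IsH1per g g')
    (hφ : ∀ x, HasDerivAt φ (φ' x) x) (hφ' : Continuous φ') (hφ_one : φ 1 = φ 0) :
    ∫ x in (0:ℝ)..1, g' x * φ x = -∫ x in (0:ℝ)..1, g x * φ' x := by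
  have hg_one : g 1 = g 0 := by simpa using hg.2.1 0
  rw [integral_deriv_mul_eq_sub_of_eq_add_integral (hg.2.2.2.1 0 1) hg.2.2.2.2.2 hφ hφ',
    hg_one, hφ_one]
  ring

open ComplexConjugate

def fourierExp (k : ℤ) (x : ℝ) : ℂ :=
  Complex.exp (2 * (π:ℂ) * Complex.I * (k:ℂ) * (x:ℂ))

theorem continuous_fourierExp (k : ℤ) : Continuous (fourierExp k) := by
  unfold fourierExp; fun_prop

theorem fourierExp_add_one (k : ℤ) (x : ℝ) : fourierExp k (x + 1) = fourierExp k x := by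
  rw [fourierExp, fourierExp, Complex.ofReal_add, Complex.ofReal_one, mul_add, mul_one,
    Complex.exp_add, mul_comm _ (k:ℂ), Complex.exp_int_mul_two_pi_mul_I, mul_one]

theorem conj_fourierExp (k : ℤ) (x : ℝ) : conj (fourierExp k x) = fourierExp (-k) x := by
  rw [fourierExp, fourierExp, ← Complex.exp_conj]
  simp only [map_mul, Complex.conj_I, Complex.conj_ofReal, map_ofNat, map_intCast]
  push_cast
  ring_nf

theorem fourierExp_mul_fourierExp (j k : ℤ) (x : ℝ) :
    fourierExp j x * fourierExp k x = fourierExp (j + k) x := by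
  rw [fourierExp, fourierExp, fourierExp, ← Complex.exp_add]
  push_cast
  ring_nf

theorem hasDerivAt_fourierExp (k : ℤ) (x : ℝ) :
    HasDerivAt (fourierExp k) (2 * (π:ℂ) * Complex.I * k * fourierExp k x) x := by
  have h := (((hasDerivAt_id x).ofReal_comp).const_mul (2 * (π:ℂ) * Complex.I * k)).cexp
  simp only [id, Complex.ofReal_one, mul_one] at h
  exact h.congr_deriv (mul_comm _ _)

theorem integral_fourierExp (k : ℤ) :
    ∫ x in (0:ℝ)..1, fourierExp k x = if k = 0 then 1 else 0 := by
  split_ifs with hk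
  · simp [fourierExp, hk]
  have hc : 2 * (π:ℂ) * Complex.I * k ≠ 0 := by
    simp [hk, Real.pi_ne_zero, Complex.I_ne_zero]
  simp only [fourierExp]
  rw [integral_exp_mul_complex hc, Complex.ofReal_one, Complex.ofReal_zero, mul_one, mul_zero,
    Complex.exp_zero, mul_comm _ (k:ℂ), Complex.exp_int_mul_two_pi_mul_I, sub_self, zero_div]

def modes (N : ℕ) : Finset ℤ := Finset.Icc (-(N:ℤ)) N

theorem neg_mem_modes {N : ℕ} {k : ℤ} (hk : k ∈ modes N) : -k ∈ modes N := by
  simp only [modes, Finset.mem_Icc] at *; omega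

def trigSum (a : ℤ → ℂ) (N : ℕ) (x : ℝ) : ℂ := ∑ k ∈ modes N, a k * fourierExp k x

def trigPoly (a : ℤ → ℂ) (N : ℕ) (x : ℝ) : ℝ := (trigSum a N x).re

def derivCoeff (a : ℤ → ℂ) (k : ℤ) : ℂ := 2 * (π:ℂ) * Complex.I * k * a k

def IsConjSymm (a : ℤ → ℂ) : Prop := ∀ k, a (-k) = conj (a k)

theorem continuous_trigSum (a : ℤ → ℂ) (N : ℕ) : Continuous (trigSum a N) :=
  continuous_finsetSum _ fun k _ => continuous_const.mul (continuous_fourierExp k)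

theorem continuous_trigPoly (a : ℤ → ℂ) (N : ℕ) : Continuous (trigPoly a N) :=
  Complex.continuous_re.comp (continuous_trigSum a N)

theorem trigPoly_add_one (a : ℤ → ℂ) (N : ℕ) (x : ℝ) :
    trigPoly a N (x + 1) = trigPoly a N x := by
  simp only [trigPoly, trigSum, fourierExp_add_one]

theorem trigPoly_one (a : ℤ → ℂ) (N : ℕ) : trigPoly a N 1 = trigPoly a N 0 := by
  simpa using trigPoly_add_one a N 0

theorem hasDerivAt_trigPoly (a : ℤ → ℂ) (N : ℕ) (x : ℝ) :
    HasDerivAt (trigPoly a N) (trigPoly (derivCoeff a) N x) x := by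
  have h : HasDerivAt (trigSum a N) (trigSum (derivCoeff a) N x) x := by
    refine HasDerivAt.fun_sum fun k _ => ?_
    exact ((hasDerivAt_fourierExp k x).const_mul (a k)).congr_deriv (by rw [derivCoeff]; ring)
  exact Complex.reCLM.hasFDerivAt.comp_hasDerivAt x h

theorem isH1per_trigPoly (a : ℤ → ℂ) (N : ℕ) :
    IsH1per (trigPoly a N) (trigPoly (derivCoeff a) N) := by
  refine ⟨continuous_trigPoly a N, trigPoly_add_one a N, trigPoly_add_one _ N,
    fun _ _ => (continuous_trigPoly _ N).intervalIntegrable _ _,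
    ((continuous_trigPoly _ N).pow 2).intervalIntegrable _ _, fun x => ?_⟩
  rw [integral_eq_sub_of_hasDerivAt (fun t _ => hasDerivAt_trigPoly a N t)
    ((continuous_trigPoly _ N).intervalIntegrable _ _)]
  ring

theorem ofReal_trigPoly {a : ℤ → ℂ} (ha : IsConjSymm a) (N : ℕ) (x : ℝ) :
    (trigPoly a N x : ℂ) = trigSum a N x := by
  refine Complex.conj_eq_iff_re.mp ?_
  rw [trigSum, map_sum]
  refine Finset.sum_equiv (Equiv.neg ℤ) (fun k => ?_) (fun k _ => ?_)
  · simp only [modes, Finset.mem_Icc, Equiv.neg_apply]; omega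
  · rw [map_mul, Equiv.neg_apply, ← ha k, conj_fourierExp]

theorem inXN_trigPoly {a : ℤ → ℂ} (ha : IsConjSymm a) (N : ℕ) : InXN N (trigPoly a N) :=
  ⟨a, ha, ofReal_trigPoly ha N⟩

theorem fc_neg_eq_integral (w : ℝ → ℝ) (k : ℤ) :
    fc w (-k) = ∫ x in (0:ℝ)..1, (w x : ℂ) * fourierExp k x := by
  simp only [fc, fourierExp, Int.cast_neg, mul_neg, neg_mul, neg_neg]

theorem isConjSymm_fc (w : ℝ → ℝ) : IsConjSymm (fc w) := by
  intro k
  conv_rhs => rw [← neg_neg k]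
  rw [fc_neg_eq_integral, fc_neg_eq_integral, ← intervalIntegral_conj]
  simp only [map_mul, Complex.conj_ofReal, conj_fourierExp, neg_neg]

theorem fc_eq_of_ofReal_eq_trigSum {v : ℝ → ℝ} {c : ℤ → ℂ} {N : ℕ}
    (hv : ∀ x, (v x : ℂ) = trigSum c N x) {j : ℤ} (hj : j ∈ modes N) : fc v j = c j := by
  have h_int (k : ℤ) : IntervalIntegrable (fun x => c k * fourierExp (k + -j) x) volume 0 1 :=
    (continuous_const.mul (continuous_fourierExp _)).intervalIntegrable _ _
  rw [← neg_neg j, fc_neg_eq_integral]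
  simp only [hv, trigSum, Finset.sum_mul, mul_assoc, fourierExp_mul_fourierExp]
  rw [integral_finsetSum fun k _ => h_int k]
  simp only [intervalIntegral.integral_const_mul, integral_fourierExp, add_neg_eq_zero, mul_ite,
    mul_one, mul_zero]
  rw [Finset.sum_ite_eq' (modes N) j c, if_pos hj, neg_neg]

theorem integral_mul_trigPoly {w : ℝ → ℝ} (hw : IntervalIntegrable w volume 0 1) (a : ℤ → ℂ)
    (N : ℕ) :
    ∫ x in (0:ℝ)..1, w x * trigPoly a N x = (∑ k ∈ modes N, a k * fc w (-k)).re := by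
  have h_int (k : ℤ) :
      IntervalIntegrable (fun x => (w x : ℂ) * (a k * fourierExp k x)) volume 0 1 :=
    IntervalIntegrable.mul_continuousOn ⟨hw.1.ofReal, hw.2.ofReal⟩
      (continuous_const.mul (continuous_fourierExp k)).continuousOn
  have h_pt (x : ℝ) :
      w x * trigPoly a N x = (∑ k ∈ modes N, (w x : ℂ) * (a k * fourierExp k x)).re := by
    rw [← Finset.mul_sum, Complex.re_ofReal_mul]; rfl
  have h_sum : IntervalIntegrable (fun x => ∑ k ∈ modes N, (w x : ℂ) * (a k * fourierExp k x))
      volume 0 1 := by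
    simpa only [Finset.sum_fn] using IntervalIntegrable.sum (modes N) fun k _ => h_int k
  have h_re := intervalIntegral_re h_sum
  simp only [RCLike.re_to_complex] at h_re
  simp only [h_pt]
  rw [h_re, integral_finsetSum fun k _ => h_int k]
  simp only [fc_neg_eq_integral, ← intervalIntegral.integral_const_mul]
  congr 2
  ext k
  exact integral_congr fun x _ => by ring

theorem projPerp_eq (N : ℕ) (w : ℝ → ℝ) (x : ℝ) : projPerp N w x = w x - trigPoly (fc w) N x :=
  rfl

theorem fc_trigPoly_fc (w : ℝ → ℝ) {N : ℕ} {k : ℤ} (hk : k ∈ modes N) :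
    fc (trigPoly (fc w) N) k = fc w k :=
  fc_eq_of_ofReal_eq_trigSum (ofReal_trigPoly (isConjSymm_fc w) N) hk

theorem integral_trigPoly_fc_mul_trigPoly {w : ℝ → ℝ} (hw : IntervalIntegrable w volume 0 1)
    (a : ℤ → ℂ) (N : ℕ) :
    ∫ x in (0:ℝ)..1, trigPoly (fc w) N x * trigPoly a N x =
      ∫ x in (0:ℝ)..1, w x * trigPoly a N x := by
  rw [integral_mul_trigPoly ((continuous_trigPoly _ N).intervalIntegrable _ _),
    integral_mul_trigPoly hw]
  congr 1
  exact Finset.sum_congr rfl fun k hk => by rw [fc_trigPoly_fc w (neg_mem_modes hk)]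

theorem integral_deriv_mul_deriv_trigPoly_fc {u u' q' : ℝ → ℝ} {c : ℤ → ℂ} {N : ℕ}
    (hu : IsH1per u u') (hq : IsH1per (trigPoly c N) q') :
    ∫ x in (0:ℝ)..1, q' x * trigPoly (derivCoeff (fc u)) N x =
      ∫ x in (0:ℝ)..1, u' x * trigPoly (derivCoeff c) N x := by
  have ibp {g g' : ℝ → ℝ} (hg : IsH1per g g') (a : ℤ → ℂ) :=
    hg.integral_deriv_mul_eq_neg (hasDerivAt_trigPoly a N) (continuous_trigPoly _ N)
      (trigPoly_one a N)
  calc ∫ x in (0:ℝ)..1, q' x * trigPoly (derivCoeff (fc u)) N x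
      = ∫ x in (0:ℝ)..1, trigPoly (derivCoeff c) N x * trigPoly (derivCoeff (fc u)) N x := by
        rw [ibp hq, ibp (isH1per_trigPoly c N)]
    _ = ∫ x in (0:ℝ)..1, trigPoly (derivCoeff (fc u)) N x * trigPoly (derivCoeff c) N x :=
        integral_congr fun x _ => mul_comm _ _
    _ = ∫ x in (0:ℝ)..1, u' x * trigPoly (derivCoeff c) N x := by
        rw [ibp (isH1per_trigPoly (fc u) N), ibp hu,
          integral_trigPoly_fc_mul_trigPoly (hu.1.intervalIntegrable 0 1)]

theorem integral_mul_eq_one_sub_half_integral_sub_sq {f g : ℝ → ℝ} {a b : ℝ}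
    (hf : Continuous f) (hg : Continuous g) (hf_sq : ∫ x in a..b, f x ^ 2 = 1)
    (hg_sq : ∫ x in a..b, g x ^ 2 = 1) :
    1 - 1 / 2 * ∫ x in a..b, (f x - g x) ^ 2 = ∫ x in a..b, g x * f x := by
  have h_expand : ∫ x in a..b, (f x - g x) ^ 2 =
      ∫ x in a..b, (f x ^ 2 + g x ^ 2 - 2 * (g x * f x)) :=
    integral_congr fun x _ => by ring
  rw [h_expand, intervalIntegral.integral_sub, intervalIntegral.integral_add,
    intervalIntegral.integral_const_mul, hf_sq, hg_sq]
  · ring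
  all_goals exact Continuous.intervalIntegrable (by fun_prop) _ _

theorem energy_difference_projection_identity_general (z1 z2 R : ℝ)
    (u u' : ℝ → ℝ) (E : ℝ) (hu : IsH1per u u')
    (hunorm : (∫ x in (0:ℝ)..1, (u x) ^ 2) = 1)
    (huE : ∀ v v' : ℝ → ℝ, IsH1per v v' →
      aR z1 z2 R u u' v v' = E * ∫ x in (0:ℝ)..1, u x * v x)
    (N : ℕ) (uN uN' : ℝ → ℝ) (EN : ℝ)
    (huN : IsH1per uN uN') (huNX : InXN N uN)
    (huNnorm : (∫ x in (0:ℝ)..1, (uN x) ^ 2) = 1)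
    (huNE : ∀ v v' : ℝ → ℝ, IsH1per v v' → InXN N v →
      aR z1 z2 R uN uN' v v' = EN * ∫ x in (0:ℝ)..1, uN x * v x) :
    (EN - E) * (1 - (1 / 2) * ∫ x in (0:ℝ)..1, (uN x - u x) ^ 2) =
      z1 * uN 0 * projPerp N u 0 + z2 * uN R * projPerp N u R := by
  obtain ⟨c, -, hc⟩ := huNX
  obtain rfl : uN = trigPoly c N := funext fun x => by
    rw [trigPoly, ← show (uN x : ℂ) = trigSum c N x from hc x, Complex.ofReal_re]
  have hEN := huNE _ _ (isH1per_trigPoly (fc u) N) (inXN_trigPoly (isConjSymm_fc u) N)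
  have hE := huE _ _ (isH1per_trigPoly c N)
  have h_grad := integral_deriv_mul_deriv_trigPoly_fc hu huN
  have h_L2 : ∫ x in (0:ℝ)..1, trigPoly c N x * trigPoly (fc u) N x =
      ∫ x in (0:ℝ)..1, u x * trigPoly c N x :=
    (integral_congr fun x _ => mul_comm _ _).trans
      (integral_trigPoly_fc_mul_trigPoly (hu.1.intervalIntegrable 0 1) c N)
  unfold aR at hEN hE
  rw [h_grad, h_L2] at hEN
  rw [integral_mul_eq_one_sub_half_integral_sub_sq huN.1 hu.1 huNnorm hunorm, projPerp_eq,
    projPerp_eq]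
  linear_combination hE - hEN

/-- Exact identity from the proof of Lemma 1:
`(E_N − E)·(1 − (1/2)∫₀¹ (u_N − u)²) = z1 u_N(0) (Π_N^⊥u)(0) + z2 u_N(R) (Π_N^⊥u)(R)`. -/
theorem energy_difference_projection_identity (z1 z2 R : ℝ) (hz1 : 0 < z1) (hz2 : 0 < z2)
    (hR : R ∈ Set.Ioo (0 : ℝ) 1)
    (u u' : ℝ → ℝ) (E : ℝ) (hu : IsH1per u u')
    (hunorm : (∫ x in (0:ℝ)..1, (u x) ^ 2) = 1)
    (huE : ∀ v v' : ℝ → ℝ, IsH1per v v' →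
      aR z1 z2 R u u' v v' = E * ∫ x in (0:ℝ)..1, u x * v x)
    (N : ℕ) (uN uN' : ℝ → ℝ) (EN : ℝ)
    (huN : IsH1per uN uN') (huNX : InXN N uN)
    (huNnorm : (∫ x in (0:ℝ)..1, (uN x) ^ 2) = 1)
    (huNE : ∀ v v' : ℝ → ℝ, IsH1per v v' → InXN N v →
      aR z1 z2 R uN uN' v v' = EN * ∫ x in (0:ℝ)..1, uN x * v x) :
    (EN - E) * (1 - (1 / 2) * ∫ x in (0:ℝ)..1, (uN x - u x) ^ 2) =
      z1 * uN 0 * projPerp N u 0 + z2 * uN R * projPerp N u R :=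
  energy_difference_projection_identity_general z1 z2 R u u' E hu hunorm huE N uN uN' EN huN huNX
    huNnorm huNE
end
end

section
/- For every real c ≥ 0 and every integer N ≥ 1, one has | ∑_{k=N+1}^∞ 1/(c + 4π²k²) − (1/(4π²N)) · a_N | ≤ c / (48 π⁴ N³), where a_N = N ∑_{k=N+1}^∞ 1/k². (Lemma 3, eq. (bound_uN), with c playing the role of k_R².) -/
open Real

/-!
The bracketed term `a_N / (4π²N)` is exactly `∑_{m>N} 1/(4π²m²)`, and termwise
`1/(4π²m²) − 1/(c + 4π²m²) = c/(4π²m²(c + 4π²m²)) ∈ [0, c/(16π⁴m⁴)]`.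
So the difference is at most `c/(16π⁴) ∑_{m>N} m⁻⁴`, and Bernoulli's inequality gives the
telescoping bound `3 m⁻⁴ ≤ (m−1)⁻³ − m⁻³`, whence `∑_{m>N} m⁻⁴ ≤ 1/(3N³)`.
-/

lemma abs_tsum_sub_tsum_le_tsum {ι : Type*} {f g h : ι → ℝ} (hg : Summable g) (hh : Summable h)
    (hfg : ∀ i, |f i - g i| ≤ h i) : |∑' i, f i - ∑' i, g i| ≤ ∑' i, h i := by
  have hfg_sum : Summable fun i => f i - g i := .of_norm_bounded hh hfg
  have hf : Summable f := by simpa using hfg_sum.add hg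
  rw [← hf.tsum_sub hg]
  exact tsum_of_norm_bounded (f := fun i => f i - g i) hh.hasSum hfg

lemma abs_one_div_add_sub_one_div_le {a c : ℝ} (ha : 0 < a) (hc : 0 ≤ c) :
    |1 / (c + a) - 1 / a| ≤ c / a ^ 2 := by
  have hdiff : 1 / (c + a) - 1 / a = -(c / ((c + a) * a)) := by
    field_simp
    ring
  rw [hdiff, abs_neg, abs_of_nonneg (by positivity), sq]
  gcongr
  linarith

lemma summable_one_div_add_nat_pow {x : ℝ} (hx : 0 ≤ x) {p : ℕ} (hp : 1 < p) :
    Summable fun k : ℕ => 1 / (x + 1 + k) ^ p := by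
  have hp' : Summable fun k : ℕ => 1 / ((k + 1 : ℕ) : ℝ) ^ p :=
    (summable_nat_add_iff 1).mpr (Real.summable_one_div_nat_pow.mpr hp)
  refine .of_nonneg_of_le (fun k => by positivity) (fun k => ?_) hp'
  gcongr
  push_cast
  linarith

lemma natCast_mul_one_div_add_one_pow_succ_le {y : ℝ} (hy : 0 < y) (p : ℕ) :
    p * (1 / (y + 1) ^ (p + 1)) ≤ 1 / y ^ p - 1 / (y + 1) ^ p := by
  have hbern : 1 + p * (1 / y) ≤ (1 + 1 / y) ^ p :=
    one_add_mul_le_pow (by linarith [one_div_pos.mpr hy]) p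
  have hdiv : (1 + 1 / y) ^ p = (y + 1) ^ p / y ^ p := by
    rw [← div_pow]; congr 1; field_simp
  rw [hdiv] at hbern
  have hy1 : 0 < (y + 1) ^ p := by positivity
  have key : p * (1 / (y + 1)) ≤ (y + 1) ^ p / y ^ p - 1 := by
    have : p * (1 / (y + 1)) ≤ p * (1 / y) := by gcongr; linarith
    linarith
  have := div_le_div_of_nonneg_right key hy1.le
  calc (p : ℝ) * (1 / (y + 1) ^ (p + 1)) = p * (1 / (y + 1)) / (y + 1) ^ p := by
        rw [pow_succ]; field_simp
    _ ≤ ((y + 1) ^ p / y ^ p - 1) / (y + 1) ^ p := this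
    _ = 1 / y ^ p - 1 / (y + 1) ^ p := by field_simp

lemma natCast_mul_tsum_one_div_add_nat_pow_succ_le {x : ℝ} (hx : 0 < x) (p : ℕ) :
    p * ∑' k : ℕ, 1 / (x + 1 + k) ^ (p + 1) ≤ 1 / x ^ p := by
  rw [← tsum_mul_left]
  refine Real.tsum_le_of_sum_range_le (fun k => by positivity) fun n => ?_
  let g : ℕ → ℝ := fun k => 1 / (x + k) ^ p
  calc ∑ k ∈ Finset.range n, p * (1 / (x + 1 + k) ^ (p + 1))
      ≤ ∑ k ∈ Finset.range n, (g k - g (k + 1)) := by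
        refine Finset.sum_le_sum fun k _ => ?_
        have := natCast_mul_one_div_add_one_pow_succ_le (y := x + k) (by positivity) p
        simp only [g, Nat.cast_succ]
        rwa [add_right_comm x 1, ← add_assoc]
    _ = g 0 - g n := Finset.sum_range_sub' g n
    _ ≤ 1 / x ^ p := by
        have : 0 ≤ g n := by positivity
        simp only [g, Nat.cast_zero, add_zero] at this ⊢
        linarith

/-- For every `c ≥ 0` and every integer `N ≥ 1`,
`|∑_{k=N+1}^∞ 1/(c + 4π²k²) − a_N/(4π²N)| ≤ c/(48π⁴N³)`,
where `a_N = N ∑_{k=N+1}^∞ 1/k²`. (Lemma 3, eq. (bound_uN).) -/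
theorem tail_sum_inv_shifted_quadratic (c : ℝ) (hc : 0 ≤ c) (N : ℕ) (hN : 1 ≤ N) :
    |(∑' k : ℕ, 1 / (c + 4 * π ^ 2 * ((N : ℝ) + 1 + (k : ℝ)) ^ 2)) -
        (1 / (4 * π ^ 2 * (N : ℝ))) *
          ((N : ℝ) * ∑' k : ℕ, 1 / ((N : ℝ) + 1 + (k : ℝ)) ^ 2)| ≤
      c / (48 * π ^ 4 * (N : ℝ) ^ 3) := by
  have hNpos : (0 : ℝ) < N := by exact_mod_cast hN
  have hmain : (1 / (4 * π ^ 2 * (N : ℝ))) * ((N : ℝ) * ∑' k : ℕ, 1 / ((N : ℝ) + 1 + k) ^ 2) =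
      ∑' k : ℕ, 1 / (4 * π ^ 2 * ((N : ℝ) + 1 + k) ^ 2) := by
    rw [← mul_assoc, ← tsum_mul_left]
    congr 1; ext k; field_simp
  have htail : 3 * ∑' k : ℕ, 1 / ((N : ℝ) + 1 + k) ^ 4 ≤ 1 / (N : ℝ) ^ 3 := by
    exact_mod_cast natCast_mul_tsum_one_div_add_nat_pow_succ_le hNpos 3
  calc _ = |(∑' k : ℕ, 1 / (c + 4 * π ^ 2 * ((N : ℝ) + 1 + k) ^ 2)) -
        ∑' k : ℕ, 1 / (4 * π ^ 2 * ((N : ℝ) + 1 + k) ^ 2)| := by rw [hmain]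
    _ ≤ ∑' k : ℕ, c / (16 * π ^ 4) * (1 / ((N : ℝ) + 1 + k) ^ 4) := by
        refine abs_tsum_sub_tsum_le_tsum ?_ ?_ fun k => ?_
        · exact (summable_one_div_add_nat_pow hNpos.le one_lt_two).mul_left (1 / (4 * π ^ 2)) |>.congr
            fun k => by field_simp
        · exact (summable_one_div_add_nat_pow hNpos.le (by norm_num)).mul_left _
        · refine (abs_one_div_add_sub_one_div_le (by positivity) hc).trans_eq ?_
          field_simp; ring
    _ = c / (16 * π ^ 4) * ∑' k : ℕ, 1 / ((N : ℝ) + 1 + k) ^ 4 := tsum_mul_left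
    _ ≤ c / (16 * π ^ 4) * (1 / (3 * (N : ℝ) ^ 3)) := by
        gcongr
        rw [mul_comm 3, ← div_div, le_div_iff₀ three_pos]
        linarith
    _ = c / (48 * π ^ 4 * (N : ℝ) ^ 3) := by field_simp; ring
end

section
/- For every integer N ≥ 1 and every R ∈ (0,1), the function h_N(R) = ∑_{k=N+1}^∞ cos(2πkR)/(4π²k²) satisfies the exact identity h_N(R) = h_N(1/2) + (1/2) ∫_{1/2}^R (R − t) · sin((2N+1)πt) / sin(πt) dt, where h_N(1/2) = ∑_{k=N+1}^∞ (−1)^k/(4π²k²). -/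
/-!
On `[0, 1]` the full series `∑_{n ≥ 1} cos(2πnx)/(2πn)²` equals `B₂(x)/4`, with `B₂` the second
Bernoulli polynomial, so `h_N` agrees there with the smooth function `B₂(x)/4` minus a
trigonometric polynomial. Its second derivative is `1/2 + ∑_{n ≤ N} cos(2πnx)`, which is half the
Dirichlet kernel `sin((2N+1)πx)/sin(πx)`, and its first derivative vanishes at `1/2`.
Taylor's formula with integral remainder around `1/2` then gives the identity.
-/

open Real Finset

theorem taylor_integral_remainder_two {f f' f'' : ℝ → ℝ} {a b : ℝ}
    (hf : ∀ t ∈ Set.uIcc a b, HasDerivAt f (f' t) t)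
    (hf' : ∀ t ∈ Set.uIcc a b, HasDerivAt f' (f'' t) t)
    (hf'' : IntervalIntegrable f'' MeasureTheory.volume a b) :
    f b = f a + f' a * (b - a) + ∫ t in a..b, (b - t) * f'' t := by
  have hf'_int : IntervalIntegrable f' MeasureTheory.volume a b :=
    ContinuousOn.intervalIntegrable fun t ht => (hf' t ht).continuousAt.continuousWithinAt
  have hsub : ∀ t ∈ Set.uIcc a b, HasDerivAt (fun t => b - t) (-1) t :=
    fun t _ => by simpa using (hasDerivAt_id t).const_sub b
  rw [intervalIntegral.integral_mul_deriv_eq_deriv_mul hsub hf' intervalIntegrable_const hf'']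
  simp only [neg_one_mul, intervalIntegral.integral_neg,
    intervalIntegral.integral_eq_sub_of_hasDerivAt hf hf'_int]
  ring

theorem hasDerivAt_cos_mul_div_sq {a : ℝ} (ha : a ≠ 0) (x : ℝ) :
    HasDerivAt (fun x => cos (a * x) / a ^ 2) (-(sin (a * x) / a)) x :=
  ((((hasDerivAt_id' x).const_mul a).cos).div_const (a ^ 2)).congr_deriv (by field_simp)

theorem hasDerivAt_sin_mul_div {a : ℝ} (ha : a ≠ 0) (x : ℝ) :
    HasDerivAt (fun x => sin (a * x) / a) (cos (a * x)) x :=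
  ((((hasDerivAt_id' x).const_mul a).sin).div_const a).congr_deriv (by field_simp)

theorem sin_mul_one_add_two_mul_sum_cos (N : ℕ) (t : ℝ) :
    sin (π * t) * (1 + 2 * ∑ n ∈ Icc 1 N, cos (2 * π * n * t)) = sin ((2 * N + 1) * π * t) := by
  induction N with
  | zero => simp
  | succ N ih =>
    rw [sum_Icc_succ_top (by omega), mul_add 2, ← add_assoc, mul_add, ih]
    have := sin_sub_sin ((2 * (N + 1 : ℕ) + 1) * π * t) ((2 * N + 1) * π * t)
    push_cast at this ⊢
    ring_nf at this ⊢
    linarith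

theorem hasSum_cos_div_sq {x : ℝ} (hx : x ∈ Set.Icc 0 1) :
    HasSum (fun n : ℕ => cos (2 * π * n * x) / (2 * π * n) ^ 2) (bernoulliFun 2 x / 4) := by
  have h := (hasSum_one_div_nat_pow_mul_cos one_ne_zero hx).div_const ((2 * π) ^ 2)
  have hval : bernoulliFun 2 x / 4 = (-1 : ℝ) ^ (1 + 1) * (2 * π) ^ (2 * 1) / 2 /
      ((2 * 1).factorial : ℕ) * bernoulliFun (2 * 1) x / (2 * π) ^ 2 := by
    norm_num
    field_simp
    ring
  rw [hval]
  exact h.congr_fun fun n => by ring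

theorem sum_range_succ_eq_sum_Icc_one {M : Type*} [AddCommMonoid M] {f : ℕ → M} (h0 : f 0 = 0)
    (N : ℕ) :
    ∑ n ∈ range (N + 1), f n = ∑ n ∈ Icc 1 N, f n := by
  rw [range_eq_Ico, sum_eq_sum_Ico_succ_bot N.succ_pos, h0, zero_add]
  rfl

noncomputable def tailClosedForm (N : ℕ) (x : ℝ) : ℝ :=
  bernoulliFun 2 x / 4 - ∑ n ∈ Icc 1 N, cos (2 * π * n * x) / (2 * π * n) ^ 2

theorem hasSum_tailClosedForm (N : ℕ) {x : ℝ} (hx : x ∈ Set.Icc 0 1) :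
    HasSum (fun k : ℕ => cos (2 * π * (N + 1 + k) * x) / (4 * π ^ 2 * (N + 1 + k) ^ 2))
      (tailClosedForm N x) := by
  have h := (hasSum_nat_add_iff' (N + 1)).mpr (hasSum_cos_div_sq hx)
  rw [sum_range_succ_eq_sum_Icc_one (by simp)] at h
  exact h.congr_fun fun k => by push_cast; ring_nf

theorem hasDerivAt_tailClosedForm (N : ℕ) (x : ℝ) :
    HasDerivAt (tailClosedForm N)
      (bernoulliFun 1 x / 2 + ∑ n ∈ Icc 1 N, sin (2 * π * n * x) / (2 * π * n)) x := by
  have hB := (hasDerivAt_bernoulliFun 2 x).div_const 4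
  have hS := HasDerivAt.fun_sum (u := Icc 1 N) fun n hn =>
    hasDerivAt_cos_mul_div_sq (a := 2 * π * n) (by have := (mem_Icc.1 hn).1; positivity) x
  refine (hB.sub hS).congr_deriv ?_
  simp only [sum_neg_distrib]
  push_cast
  ring

theorem hasDerivAt_tailClosedForm_deriv (N : ℕ) (x : ℝ) :
    HasDerivAt (fun x => bernoulliFun 1 x / 2 + ∑ n ∈ Icc 1 N, sin (2 * π * n * x) / (2 * π * n))
      (1 / 2 + ∑ n ∈ Icc 1 N, cos (2 * π * n * x)) x := by
  have hB := (hasDerivAt_bernoulliFun 1 x).div_const 2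
  have hS := HasDerivAt.fun_sum (u := Icc 1 N) fun n hn =>
    hasDerivAt_sin_mul_div (a := 2 * π * n) (by have := (mem_Icc.1 hn).1; positivity) x
  refine (hB.add hS).congr_deriv ?_
  simp

theorem hasSum_neg_one_pow_tailClosedForm_half (N : ℕ) :
    HasSum (fun k : ℕ => (-1 : ℝ) ^ (N + 1 + k) / (4 * π ^ 2 * (N + 1 + k) ^ 2))
      (tailClosedForm N (1 / 2)) := by
  refine (hasSum_tailClosedForm N (by norm_num)).congr_fun fun k => ?_
  rw [← cos_nat_mul_pi]
  push_cast
  ring_nf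

theorem deriv_tailClosedForm_half_eq_zero (N : ℕ) :
    bernoulliFun 1 (1 / 2) / 2 + ∑ n ∈ Icc 1 N, sin (2 * π * n * (1 / 2)) / (2 * π * n) = 0 := by
  have hsin (n : ℕ) : sin (2 * π * n * (1 / 2)) = 0 := by
    rw [← sin_nat_mul_pi n]
    ring_nf
  rw [sum_eq_zero fun n _ => by rw [hsin, zero_div]]
  simp

theorem hN_taylor_identity_general (N : ℕ) (R : ℝ) (hR : R ∈ Set.Ioo (0 : ℝ) 1) :
    (∑' k : ℕ,
        Real.cos (2 * π * ((N : ℝ) + 1 + (k : ℝ)) * R) /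
          (4 * π ^ 2 * ((N : ℝ) + 1 + (k : ℝ)) ^ 2)) =
      (∑' k : ℕ, (-1 : ℝ) ^ (N + 1 + k) / (4 * π ^ 2 * ((N : ℝ) + 1 + (k : ℝ)) ^ 2)) +
        (1 / 2) * ∫ t in (1 / 2 : ℝ)..R,
          (R - t) * Real.sin ((2 * (N : ℝ) + 1) * π * t) / Real.sin (π * t) := by
  have hRIcc : R ∈ Set.Icc (0 : ℝ) 1 := Set.Ioo_subset_Icc_self hR
  have hsin_pos : ∀ t ∈ Set.uIcc (1 / 2 : ℝ) R, 0 < sin (π * t) := fun t ht => by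
    obtain ⟨ht0, ht1⟩ := Set.ordConnected_Ioo.uIcc_subset (by norm_num) hR ht
    exact sin_pos_of_pos_of_lt_pi (by positivity) (by nlinarith [pi_pos])
  have hkernel : ∫ t in (1 / 2 : ℝ)..R, (R - t) * (1 / 2 + ∑ n ∈ Icc 1 N, cos (2 * π * n * t))
      = (1 / 2) * ∫ t in (1 / 2 : ℝ)..R, (R - t) * sin ((2 * N + 1) * π * t) / sin (π * t) := by
    rw [← intervalIntegral.integral_const_mul]
    refine intervalIntegral.integral_congr fun t ht => ?_
    rw [← sin_mul_one_add_two_mul_sum_cos N t, mul_left_comm,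
      mul_div_cancel_left₀ _ (hsin_pos t ht).ne']
    ring
  have hcont : Continuous fun t : ℝ => 1 / 2 + ∑ n ∈ Icc 1 N, cos (2 * π * n * t) := by fun_prop
  have htaylor := taylor_integral_remainder_two (a := 1 / 2) (b := R)
    (fun t _ => hasDerivAt_tailClosedForm N t) (fun t _ => hasDerivAt_tailClosedForm_deriv N t)
    (hcont.intervalIntegrable _ _)
  rw [(hasSum_tailClosedForm N hRIcc).tsum_eq, (hasSum_neg_one_pow_tailClosedForm_half N).tsum_eq,
    htaylor, deriv_tailClosedForm_half_eq_zero, hkernel]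
  ring

/-- For every integer `N ≥ 1` and every `R ∈ (0,1)`, the function
`h_N(R) = ∑_{k=N+1}^∞ cos(2πkR)/(4π²k²)` satisfies the exact identity
`h_N(R) = h_N(1/2) + (1/2) ∫_{1/2}^R (R − t)·sin((2N+1)πt)/sin(πt) dt`,
where `h_N(1/2) = ∑_{k=N+1}^∞ (−1)^k/(4π²k²)`. -/
theorem hN_taylor_identity (N : ℕ) (hN : 1 ≤ N) (R : ℝ) (hR : R ∈ Set.Ioo (0 : ℝ) 1) :
    (∑' k : ℕ,
        Real.cos (2 * π * ((N : ℝ) + 1 + (k : ℝ)) * R) /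
          (4 * π ^ 2 * ((N : ℝ) + 1 + (k : ℝ)) ^ 2)) =
      (∑' k : ℕ, (-1 : ℝ) ^ (N + 1 + k) / (4 * π ^ 2 * ((N : ℝ) + 1 + (k : ℝ)) ^ 2)) +
        (1 / 2) * ∫ t in (1 / 2 : ℝ)..R,
          (R - t) * Real.sin ((2 * (N : ℝ) + 1) * π * t) / Real.sin (π * t) :=
  hN_taylor_identity_general N R hR
end

section
/- Let K > 0 be a constant such that sup_{x ∈ ℝ} |v(x)| ≤ K ( ∫₀¹ (v² + (v')²) )^{3/8} ( ∫₀¹ v² )^{1/8} for every v ∈ H¹_per. Then for every v ∈ H¹_per, a_R(v,v) = ∫₀¹ (v')² − z1 v(0)² − z2 v(R)² ≥ (1/2) ∫₀¹ ( v² + (v')² ) − ( 1 + (27/32)(z1 + z2)⁴ K⁸ ) ∫₀¹ v². (Coercivity of the quadratic form, from the proof of the convergence lemma.) -/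
open MeasureTheory intervalIntegral Real

noncomputable section

lemma young4 (x t : ℝ) : x ^ 3 * t ≤ (1/2) * x ^ 4 + (27/32) * t ^ 4 := by
  nlinarith [mul_nonneg (sq_nonneg (t - 2*x/3)) (sq_nonneg (t + 2*x/3)),
             mul_nonneg (sq_nonneg (t - 2*x/3)) (sq_nonneg x)]

set_option maxHeartbeats 1000000 in
/-- Coercivity of the quadratic form `a_R` (from the proof of the convergence lemma):
if `K > 0` satisfies the Sobolev-type bound (boundC0), then for every `v ∈ H¹_per`,
`a_R(v,v) ≥ (1/2)‖v‖²_{H¹} − (1 + (27/32)(z1+z2)⁴K⁸)‖v‖²_{L²}`. -/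
theorem aR_coercive (z1 z2 R : ℝ) (hz1 : 0 < z1) (hz2 : 0 < z2)
    (hR : R ∈ Set.Ioo (0 : ℝ) 1) (K : ℝ) (hK : 0 < K)
    (hbound : ∀ v v' : ℝ → ℝ, IsH1per v v' → ∀ x : ℝ,
      |v x| ≤ K * (∫ t in (0:ℝ)..1, ((v t) ^ 2 + (v' t) ^ 2)) ^ ((3 : ℝ) / 8) *
        (∫ t in (0:ℝ)..1, (v t) ^ 2) ^ ((1 : ℝ) / 8))
    (v v' : ℝ → ℝ) (hv : IsH1per v v') :
    (1 / 2) * (∫ t in (0:ℝ)..1, ((v t) ^ 2 + (v' t) ^ 2)) -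
        (1 + 27 / 32 * (z1 + z2) ^ 4 * K ^ 8) * ∫ t in (0:ℝ)..1, (v t) ^ 2 ≤
      aR z1 z2 R v v' v v' := by
  obtain ⟨hcont, hper, hper', hint', hint'2, hrep⟩ := hv
  set A := ∫ t in (0:ℝ)..1, ((v t) ^ 2 + (v' t) ^ 2) with hAdef
  set B := ∫ t in (0:ℝ)..1, (v t) ^ 2 with hBdef
  have hvint : IntervalIntegrable (fun t => (v t) ^ 2) volume 0 1 :=
    (hcont.pow 2).intervalIntegrable 0 1
  have hB0 : 0 ≤ B :=
    intervalIntegral.integral_nonneg (by norm_num) fun u _ => sq_nonneg _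
  have hI' : 0 ≤ ∫ t in (0:ℝ)..1, (v' t) ^ 2 :=
    intervalIntegral.integral_nonneg (by norm_num) fun u _ => sq_nonneg _
  have hAsplit : A = B + ∫ t in (0:ℝ)..1, (v' t) ^ 2 :=
    intervalIntegral.integral_add hvint hint'2
  have hA0 : 0 ≤ A := by rw [hAsplit]; linarith
  set a := A ^ ((1:ℝ)/8) with hadef
  set b := B ^ ((1:ℝ)/8) with hbdef
  have ha0 : 0 ≤ a := Real.rpow_nonneg hA0 _
  have hb0 : 0 ≤ b := Real.rpow_nonneg hB0 _
  have ha8 : a ^ 8 = A := by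
    rw [hadef, ← Real.rpow_natCast (A ^ ((1:ℝ)/8)) 8, ← Real.rpow_mul hA0]
    norm_num
  have hb8 : b ^ 8 = B := by
    rw [hbdef, ← Real.rpow_natCast (B ^ ((1:ℝ)/8)) 8, ← Real.rpow_mul hB0]
    norm_num
  have ha3 : A ^ ((3:ℝ)/8) = a ^ 3 := by
    rw [hadef, ← Real.rpow_natCast (A ^ ((1:ℝ)/8)) 3, ← Real.rpow_mul hA0]
    norm_num
  have hb1 : B ^ ((1:ℝ)/8) = b := rfl
  have hbd : ∀ x : ℝ, (v x) ^ 2 ≤ K ^ 2 * a ^ 6 * b ^ 2 := by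
    intro x
    have h := hbound v v' ⟨hcont, hper, hper', hint', hint'2, hrep⟩ x
    rw [← hAdef, ← hBdef, ha3, hb1] at h
    have h2 : |v x| ^ 2 ≤ (K * a ^ 3 * b) ^ 2 :=
      pow_le_pow_left₀ (abs_nonneg _) h 2
    rw [sq_abs] at h2
    calc (v x) ^ 2 ≤ (K * a ^ 3 * b) ^ 2 := h2
      _ = K ^ 2 * a ^ 6 * b ^ 2 := by ring
  have hy := young4 (a ^ 2) ((z1 + z2) * K ^ 2 * b ^ 2)
  have key : (z1 + z2) * K ^ 2 * a ^ 6 * b ^ 2 ≤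
      (1/2) * a ^ 8 + 27/32 * (z1 + z2) ^ 4 * K ^ 8 * b ^ 8 := by nlinarith [hy]
  have hb01 := hbd 0
  have hbR := hbd R
  have hz : z1 * (v 0) ^ 2 + z2 * (v R) ^ 2 ≤ (z1 + z2) * K ^ 2 * a ^ 6 * b ^ 2 := by
    have h1 := mul_le_mul_of_nonneg_left hb01 hz1.le
    have h2 := mul_le_mul_of_nonneg_left hbR hz2.le
    nlinarith
  have hintsq : (∫ x in (0:ℝ)..1, v' x * v' x) = ∫ t in (0:ℝ)..1, (v' t) ^ 2 := by
    simp [sq]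
  simp only [aR, hintsq]
  have hAB : (∫ t in (0:ℝ)..1, (v' t) ^ 2) = A - B := by linarith [hAsplit]
  rw [hAB]
  have e0 : v 0 * v 0 = v 0 ^ 2 := (sq (v 0)).symm
  have eR : v R * v R = v R ^ 2 := (sq (v R)).symm
  rw [ha8, hb8] at key
  linarith [key, hz]


end
end
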